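/- There exists an instance of online optimization with single-step memory cost in which an action sequence x_{1:t} satisfying cost(x_{1:t}) = λ·cost(x^π_{1:t}) + B with x_t ≠ x^π_t admits no feasible action at step t+1 under the constraint cost(x_{1:t+1}) ≤ λ·cost(x^π_{1:t+1}) + B; in particular, even choosing x_{t+1} = x^π_{t+1} violates the constraint, e.g., when the expert's step-(t+1) cost f(x^π_{t+1}, y_{t+1}) + ‖x^π_{t+1} − x^π_t‖ is 0 but ‖x_t − x^π_t‖ > 0, so that λ·0 adds no budget. -/
import Mathlib


open Finset

/-- Cumulative cost over steps 1..s with single-step memory cost (here on ℝ, where the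
norm is the absolute value). -/
noncomputable def cost1 (f : ℕ → ℝ → ℝ) (x : ℕ → ℝ) (s : ℕ) : ℝ :=
  ∑ t ∈ Finset.Icc 1 s, (f t (x t) + ‖x t - x (t - 1)‖)

/-- Why naive robustification fails: there is an instance with nonnegative
hitting costs, λ ≥ 1, B ≥ 0, where the prefix constraint is tight (cost(x_{1:t}) =
λ·cost(x^π_{1:t}) + B) with x_t ≠ x^π_t, and no action z is feasible at step t+1 under the
naive constraint cost(x_{1:t+1}) ≤ λ·cost(x^π_{1:t+1}) + B. -/
theorem stmt14 :
    ∃ (lam B : ℝ) (f : ℕ → ℝ → ℝ) (x xπ : ℕ → ℝ) (t : ℕ),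
      1 ≤ lam ∧ 0 ≤ B ∧ (∀ s z, 0 ≤ f s z) ∧ x 0 = xπ 0 ∧ 1 ≤ t ∧
        cost1 f x t = lam * cost1 f xπ t + B ∧
        x t ≠ xπ t ∧
        ∀ z : ℝ, ¬ (cost1 f x t + f (t + 1) z + ‖z - x t‖ ≤
          lam * cost1 f xπ (t + 1) + B) := by
  refine ⟨1, 1, fun s z => if s = 2 then |z| else 0,
    fun n => if n = 0 then 0 else 1, fun _ => 0, 1,
    le_refl 1, zero_le_one, ?_, by norm_num, le_refl 1, ?_, by norm_num, ?_⟩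
  · intro s z
    dsimp only; split <;> simp [abs_nonneg]
  · simp [cost1]
  · intro z h
    simp only [cost1, show Finset.Icc 1 1 = {1} from rfl,
      show Finset.Icc 1 2 = {1, 2} from rfl] at h
    norm_num at h
    have h1 : (1:ℝ) = |z - (z - 1)| := by norm_num
    have := abs_sub_abs_le_abs_sub z (z - 1)
    have hz := abs_nonneg z
    have hz1 := abs_nonneg (z - 1)
    nlinarith [abs_sub (z) (z-1)]
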